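/- Let n ≥ 1, let F be a cdf which is continuous on ℝ, and let U, V : ℝ → ℝ and U_j, L_j, M_j, V_j : ℝ → EReal (j = 1,…,n) be monotone functions (U, U_j, M_j non-decreasing; V, V_j, L_j non-increasing) with U, V non-negative, such that: lim_{x→+∞} U_n(x) ≥ sup{x ∈ ℝ : F(x) < 1} and lim_{x→+∞} L_1(x) ≤ inf{x ∈ ℝ : F(x) > 0}; lim_{x→+∞} U(x) = 1; lim_{x→+∞} V(x) = 0 or lim_{x→+∞} M_j(x) = lim_{x→+∞} V_j(x) for all j; and lim_{x→+∞} U_j(x) = lim_{x→+∞} L_{j+1}(x) for all j = 1,…,n−1. Then the function H(x) = U(x)·Σ_{j=1}^n (F̄(U_j(x)) − F̄(L_j(x))) − V(x)·Σ_{j=1}^n (F̄(V_j(x)) − F̄(M_j(x))) satisfies lim_{x→+∞} H(x) = 1. -/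
import Mathlib


open Filter Topology Set BigOperators

/-- A cumulative distribution function: non-decreasing, right-continuous,
tending to 0 at `-∞` and to 1 at `+∞`. -/
def IsCDF (F : ℝ → ℝ) : Prop :=
  Monotone F ∧ (∀ x : ℝ, ContinuousWithinAt F (Set.Ici x) x) ∧
    Tendsto F atBot (nhds 0) ∧ Tendsto F atTop (nhds 1)

/-- The extension of a cdf to the extended reals, with value 0 at `⊥` and 1 at `+∞`. -/
noncomputable def extCDF (F : ℝ → ℝ) (a : EReal) : ℝ :=
  if a = ⊥ then 0 else if a = ⊤ then 1 else F a.toReal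

lemma extCDF_coe (F : ℝ → ℝ) (x : ℝ) : extCDF F (x : EReal) = F x := by
  simp [extCDF]

lemma extCDF_continuous (F : ℝ → ℝ)  (hFc : Continuous F)
    (h0 : Tendsto F atBot (nhds 0)) (h1 : Tendsto F atTop (nhds 1)) :
    Continuous (extCDF F) := by
  rw [continuous_iff_continuousAt]
  intro a
  induction a using EReal.rec with
  | bot =>
    rw [ContinuousAt]
    have hval : extCDF F ⊥ = 0 := by simp [extCDF]
    rw [hval, Metric.tendsto_nhds]
    intro ε hε
    obtain ⟨r, hr⟩ := eventually_atBot.mp (Metric.tendsto_nhds.mp h0 ε hε)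
    filter_upwards [Iio_mem_nhds (show (⊥ : EReal) < (r : EReal) from EReal.bot_lt_coe r)]
      with a ha
    induction a using EReal.rec with
    | bot => simpa [extCDF] using hε
    | coe x =>
      rw [extCDF_coe]
      exact hr x (le_of_lt (by exact_mod_cast mem_Iio.mp ha))
    | top => exact absurd ha (by simp)
  | coe x =>
    rw [ContinuousAt, extCDF_coe, EReal.nhds_coe, tendsto_map'_iff]
    have : (extCDF F ∘ (fun y : ℝ => (y : EReal))) = F := funext (extCDF_coe F)
    rw [this]
    exact hFc.tendsto x
  | top =>
    rw [ContinuousAt]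
    have hval : extCDF F ⊤ = 1 := by simp [extCDF]
    rw [hval, Metric.tendsto_nhds]
    intro ε hε
    obtain ⟨r, hr⟩ := eventually_atTop.mp (Metric.tendsto_nhds.mp h1 ε hε)
    filter_upwards [Ioi_mem_nhds (show (r : EReal) < (⊤ : EReal) from EReal.coe_lt_top r)]
      with a ha
    induction a using EReal.rec with
    | bot => exact absurd ha (by simp)
    | coe x =>
      rw [extCDF_coe]
      exact hr x (le_of_lt (by exact_mod_cast mem_Ioi.mp ha))
    | top => simpa [extCDF] using hε

lemma extCDF_eq_one (F : ℝ → ℝ) (hmono : Monotone F) (hFc : Continuous F)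
    (h0 : Tendsto F atBot (nhds 0)) (h1 : Tendsto F atTop (nhds 1)) (a : EReal)
    (h : sSup ((fun x : ℝ => (x : EReal)) '' {x | F x < 1}) ≤ a) : extCDF F a = 1 := by
  have hne : ∃ x, F x < 1 := (h0.eventually (eventually_lt_nhds zero_lt_one)).exists
  induction a using EReal.rec with
  | bot =>
    exfalso
    obtain ⟨x, hx⟩ := hne
    have hmem : ((x : ℝ) : EReal) ∈ (fun x : ℝ => (x : EReal)) '' {x | F x < 1} := ⟨x, hx, rfl⟩
    have hle : ((x : EReal)) ≤ ⊥ := le_trans (le_sSup hmem) h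
    simpa using hle
  | coe r =>
    have hFle : ∀ y : ℝ, F y ≤ 1 := by
      intro y
      refine ge_of_tendsto h1 ?_
      filter_upwards [eventually_ge_atTop y] with z hz using hmono hz
    have key : ∀ y : ℝ, r < y → F y = 1 := by
      intro y hy
      by_contra hne'
      have hFy : F y < 1 := lt_of_le_of_ne (hFle y) hne'
      have hmem : ((y : ℝ) : EReal) ∈ (fun x : ℝ => (x : EReal)) '' {x | F x < 1} := ⟨y, hFy, rfl⟩
      have : ((y : EReal)) ≤ (r : EReal) := le_trans (le_sSup hmem) h
      exact absurd (by exact_mod_cast this) (not_le.mpr hy)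
    have ht1 : Tendsto F (𝓝[>] r) (𝓝 (F r)) :=
      (hFc.tendsto r).mono_left nhdsWithin_le_nhds
    have ht2 : Tendsto F (𝓝[>] r) (𝓝 1) := by
      refine Tendsto.congr' ?_ tendsto_const_nhds
      filter_upwards [self_mem_nhdsWithin] with y hy
      exact (key y hy).symm
    rw [extCDF_coe]
    exact tendsto_nhds_unique ht1 ht2
  | top => simp [extCDF]

lemma extCDF_eq_zero (F : ℝ → ℝ) (hmono : Monotone F) (hFc : Continuous F)
    (h0 : Tendsto F atBot (nhds 0)) (h1 : Tendsto F atTop (nhds 1)) (a : EReal)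
    (h : a ≤ sInf ((fun x : ℝ => (x : EReal)) '' {x | 0 < F x})) : extCDF F a = 0 := by
  have hne : ∃ x, 0 < F x := (h1.eventually (eventually_gt_nhds zero_lt_one)).exists
  induction a using EReal.rec with
  | top =>
    exfalso
    obtain ⟨x, hx⟩ := hne
    have hmem : ((x : ℝ) : EReal) ∈ (fun x : ℝ => (x : EReal)) '' {x | 0 < F x} := ⟨x, hx, rfl⟩
    have hle : (⊤ : EReal) ≤ (x : EReal) := le_trans h (sInf_le hmem)
    simpa using hle
  | coe r =>
    have hFge : ∀ y : ℝ, 0 ≤ F y := by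
      intro y
      refine le_of_tendsto h0 ?_
      filter_upwards [eventually_le_atBot y] with z hz using hmono hz
    have key : ∀ y : ℝ, y < r → F y = 0 := by
      intro y hy
      by_contra hne'
      have hFy : 0 < F y := lt_of_le_of_ne (hFge y) (Ne.symm hne')
      have hmem : ((y : ℝ) : EReal) ∈ (fun x : ℝ => (x : EReal)) '' {x | 0 < F x} := ⟨y, hFy, rfl⟩
      have : ((r : EReal)) ≤ (y : EReal) := le_trans h (sInf_le hmem)
      exact absurd (by exact_mod_cast this) (not_le.mpr hy)
    have ht1 : Tendsto F (𝓝[<] r) (𝓝 (F r)) :=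
      (hFc.tendsto r).mono_left nhdsWithin_le_nhds
    have ht2 : Tendsto F (𝓝[<] r) (𝓝 0) := by
      refine Tendsto.congr' ?_ tendsto_const_nhds
      filter_upwards [self_mem_nhdsWithin] with y hy
      exact (key y hy).symm
    rw [extCDF_coe]
    exact tendsto_nhds_unique ht1 ht2
  | bot => simp [extCDF]

/-- Step (ii) of the proof of Theorem 1: `lim_{x→+∞} H(x) = 1`. -/
theorem stmt_17
    (n : ℕ) (hn : 1 ≤ n)
    (F : ℝ → ℝ) (hF : IsCDF F) (hFc : Continuous F)
    (U V : ℝ → ℝ) (Uj Lj Mj Vj : Fin n → ℝ → EReal)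
    (c1U : ∀ x, 0 ≤ U x) (c1V : ∀ x, 0 ≤ V x)
    (c2U : Monotone U) (c2Uj : ∀ j, Monotone (Uj j)) (c2Mj : ∀ j, Monotone (Mj j))
    (c2V : Antitone V) (c2Vj : ∀ j, Antitone (Vj j)) (c2Lj : ∀ j, Antitone (Lj j))
    (uTop vTop : ℝ) (UjTop LjTop MjTop VjTop : Fin n → EReal)
    (hU_top : Tendsto U atTop (nhds uTop)) (hV_top : Tendsto V atTop (nhds vTop))
    (hUj_top : ∀ j, Tendsto (Uj j) atTop (nhds (UjTop j)))
    (hLj_top : ∀ j, Tendsto (Lj j) atTop (nhds (LjTop j)))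
    (hMj_top : ∀ j, Tendsto (Mj j) atTop (nhds (MjTop j)))
    (hVj_top : ∀ j, Tendsto (Vj j) atTop (nhds (VjTop j)))
    (c6a : sSup ((fun x : ℝ => (x : EReal)) '' {x | F x < 1}) ≤ UjTop ⟨n - 1, by omega⟩)
    (c6b : LjTop ⟨0, by omega⟩ ≤ sInf ((fun x : ℝ => (x : EReal)) '' {x | 0 < F x}))
    (c7 : uTop = 1)
    (c8 : vTop = 0 ∨ ∀ j, MjTop j = VjTop j)
    (c9 : ∀ j : Fin n, ∀ h : (j : ℕ) + 1 < n, UjTop j = LjTop ⟨(j : ℕ) + 1, h⟩) :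
    Tendsto (fun x =>
      U x * ∑ j, (extCDF F (Uj j x) - extCDF F (Lj j x))
        - V x * ∑ j, (extCDF F (Vj j x) - extCDF F (Mj j x)))
      atTop (nhds 1) := by
  obtain ⟨hmono, -, h0, h1⟩ := hF
  have hc := extCDF_continuous F hFc h0 h1
  have hS1 : Tendsto (fun x => ∑ j, (extCDF F (Uj j x) - extCDF F (Lj j x))) atTop
      (nhds (∑ j, (extCDF F (UjTop j) - extCDF F (LjTop j)))) :=
    tendsto_finset_sum _ fun j _ =>
      (((hc.tendsto _).comp (hUj_top j)).sub ((hc.tendsto _).comp (hLj_top j)))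
  have hS2 : Tendsto (fun x => ∑ j, (extCDF F (Vj j x) - extCDF F (Mj j x))) atTop
      (nhds (∑ j, (extCDF F (VjTop j) - extCDF F (MjTop j)))) :=
    tendsto_finset_sum _ fun j _ =>
      (((hc.tendsto _).comp (hVj_top j)).sub ((hc.tendsto _).comp (hMj_top j)))
  have hT := (hU_top.mul hS1).sub (hV_top.mul hS2)
  -- compute the first sum
  set A : ℕ → ℝ := fun j => if h : j < n then extCDF F (LjTop ⟨j, h⟩) else 1 with hA
  have hA0 : A 0 = 0 := by
    rw [hA]
    simp only [dif_pos (show 0 < n by omega)]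
    exact extCDF_eq_zero F hmono hFc h0 h1 _ c6b
  have hAn : A n = 1 := by rw [hA]; simp
  have step : ∀ j : Fin n,
      extCDF F (UjTop j) - extCDF F (LjTop j) = A ((j : ℕ) + 1) - A (j : ℕ) := by
    intro j
    have hL : A (j : ℕ) = extCDF F (LjTop j) := by
      rw [hA]; simp only [dif_pos j.isLt, Fin.eta]
    have hU : extCDF F (UjTop j) = A ((j : ℕ) + 1) := by
      by_cases h : (j : ℕ) + 1 < n
      · rw [c9 j h, hA]; simp only [dif_pos h]
      · have hjlt := j.isLt
        have hj : j = ⟨n - 1, by omega⟩ := Fin.ext (show (j : ℕ) = n - 1 by omega)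
        have hA1 : A ((j : ℕ) + 1) = 1 := by rw [hA]; simp [h]
        rw [hA1, hj]
        exact extCDF_eq_one F hmono hFc h0 h1 _ c6a
    rw [hU, hL]
  have hsum1 : ∑ j, (extCDF F (UjTop j) - extCDF F (LjTop j)) = 1 := by
    calc ∑ j : Fin n, (extCDF F (UjTop j) - extCDF F (LjTop j))
        = ∑ j : Fin n, (A ((j : ℕ) + 1) - A (j : ℕ)) :=
          Finset.sum_congr rfl fun j _ => step j
      _ = ∑ j ∈ Finset.range n, (A (j + 1) - A j) :=
          Fin.sum_univ_eq_sum_range (fun j => A (j + 1) - A j) n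
      _ = A n - A 0 := Finset.sum_range_sub A n
      _ = 1 := by rw [hA0, hAn]; ring
  have hval : uTop * (∑ j, (extCDF F (UjTop j) - extCDF F (LjTop j)))
      - vTop * (∑ j, (extCDF F (VjTop j) - extCDF F (MjTop j))) = 1 := by
    rcases c8 with h8 | h8
    · rw [hsum1, c7, h8]; ring
    · have : ∑ j, (extCDF F (VjTop j) - extCDF F (MjTop j)) = 0 := by
        apply Finset.sum_eq_zero
        intro j _
        rw [h8 j]; ring
      rw [hsum1, c7, this]; ring
  rwa [hval] at hT
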